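/- arXiv:2509.00036 — 2 statements merged into one kernel-verified Lean document; each statement's English description precedes it below -/
import Mathlib

section
/- If X is a Gaussian random vector with X | X₀ ∼ N(ᾱ X₀, σ² I) for constants ᾱ > 0, σ > 0 and X₀ has density p₀, then Tweedie's formula holds: E[X₀ | X = x] = (x + σ² ∇ log p(x)) / ᾱ, where p is the marginal density of X. -/
/-!
The posterior weight of `x₀` given `X = x` is proportional to `w(x₀) = p₀(x₀) φ_σ(x - ᾱ x₀)`, and
`∇ₓ φ_σ(x - ᾱ x₀) = φ_σ(x - ᾱ x₀) (ᾱ x₀ - x) / σ²`. Differentiating under the integral sign,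
`σ² ∇p(x) = ᾱ ∫ w(x₀) x₀ dx₀ - p(x) x`; dividing by `ᾱ p(x)` gives Tweedie's formula.
-/

open MeasureTheory Real

noncomputable section

/-- Isotropic Gaussian density `N(0, c²I)` on `ℝ^d`, evaluated at `y`. -/
def gaussDen (d : ℕ) (c : ℝ) (y : EuclideanSpace ℝ (Fin d)) : ℝ :=
  (2 * π * c ^ 2) ^ (-(d : ℝ) / 2) * Real.exp (-‖y‖ ^ 2 / (2 * c ^ 2))

theorem integral_div_smul_affine {Ω E : Type*} [MeasurableSpace Ω] {μ : Measure Ω}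
    [NormedAddCommGroup E] [NormedSpace ℝ E] [CompleteSpace E] {w : Ω → ℝ} {v : Ω → E}
    (hw : Integrable w μ) (hwv : Integrable (fun y => w y • v y) μ) (a s : ℝ) (x : E) :
    ∫ y, (w y / s) • (a • v y - x) ∂μ
      = (a / s) • ∫ y, w y • v y ∂μ - (s⁻¹ * ∫ y, w y ∂μ) • x := by
  have hexpand : ∀ y, (w y / s) • (a • v y - x) = (a / s) • (w y • v y) - s⁻¹ • (w y • x) :=
    fun y => by module
  simp_rw [hexpand]
  have hleft : Integrable (fun y => (a / s) • (w y • v y)) μ := hwv.smul _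
  have hright : Integrable (fun y => s⁻¹ • (w y • x)) μ := (hw.smul_const x).smul _
  rw [integral_sub hleft hright, integral_smul, integral_smul, integral_smul_const, smul_smul]

/-- Tweedie's formula: if `X | X₀ ∼ N(ᾱ X₀, σ² I)` and `X₀` has density `p₀`, then
`E[X₀ | X = x] = (x + σ² ∇ log p(x)) / ᾱ`, where `p` is the marginal density of `X`
(differentiation under the integral sign being assumed via the hypothesis `hgrad`). -/
theorem stmt5 {d : ℕ} (α σ : ℝ) (hα : 0 < α) (hσ : 0 < σ)
    (p₀ : EuclideanSpace ℝ (Fin d) → ℝ)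
    (p : EuclideanSpace ℝ (Fin d) → ℝ)
    (hp : ∀ x, p x = ∫ x₀, p₀ x₀ * gaussDen d σ (x - α • x₀))
    (hpos : ∀ x, 0 < p x)
    (hint : ∀ x, Integrable (fun x₀ => (p₀ x₀ * gaussDen d σ (x - α • x₀)) • x₀))
    -- differentiation under the integral sign: the gradient of `p` is the
    -- integral of the gradient of the Gaussian kernel
    (hgrad : ∀ x, HasGradientAt p
      (∫ x₀, ((p₀ x₀ * gaussDen d σ (x - α • x₀)) / σ ^ 2) • (α • x₀ - x)) x) :
    ∀ x,
      (p x)⁻¹ • (∫ x₀, (p₀ x₀ * gaussDen d σ (x - α • x₀)) • x₀)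
        = α⁻¹ • (x + (σ ^ 2) • ((p x)⁻¹ • gradient p x)) := by
  intro x
  have hpx : p x ≠ 0 := (hpos x).ne'
  have hweight : Integrable fun x₀ => p₀ x₀ * gaussDen d σ (x - α • x₀) :=
    .of_integral_ne_zero (hp x ▸ hpx)
  have hgradient : gradient p x = (α / σ ^ 2) • (∫ x₀, (p₀ x₀ * gaussDen d σ (x - α • x₀)) • x₀)
      - ((σ ^ 2)⁻¹ * p x) • x := by
    rw [(hgrad x).gradient, integral_div_smul_affine hweight (hint x), hp x]
  have hσ2 : σ ^ 2 ≠ 0 := pow_ne_zero _ hσ.ne'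
  rw [hgradient]
  match_scalars
  · field_simp [hα.ne']
  · field_simp [hα.ne']
    ring

end
end

section
/- One-step local truncation bound for the exponential integrator: suppose x solves x'(t) = λx(t) + h(t) on [t₀, t₀+Δt] where h is twice continuously differentiable with ‖h''‖ ≤ M on the interval and λ ≥ 0. Then the scheme x̂ = e^{λΔt}x(t₀) + a·h(t₀) + b·h'(t₀) with a = (e^{λΔt}−1)/λ, b = (e^{λΔt}−1−λΔt)/λ² satisfies ‖x(t₀+Δt) − x̂‖ ≤ (M/2)·∫_0^{Δt} e^{λ(Δt−s)} s² ds ≤ (M/2) e^{λΔt} Δt³/3. -/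
/-!
Let `T = t₀ + Δt` and let `G t` be the scheme restarted from the exact data at time `t` and run
for the remaining time `T - t`. Since `x' = λx + h`, `φ₁' = e^{λτ}` and `φ₂' = φ₁`, all terms of
`G'` cancel except `φ₂(T - t) h''(t)`. As `G T = x T` and `G t₀ = x̂`, the error is
`∫_{t₀}^{T} φ₂(T - t) h''(t) dt`, and `φ₂ ≥ 0` bounds it by `M ∫₀^{Δt} φ₂`, which equals
`(1/2) ∫₀^{Δt} e^{λ(Δt-s)} s² ds` (the Taylor kernel). The second bound is `e^{λ(Δt-s)} ≤ e^{λΔt}`.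
-/

open Set intervalIntegral

namespace ExpIntegrator

/-- `τ φ₁(λτ)` for the first φ-function `φ₁(z) = (e^z - 1)/z`; the junk value at `λ = 0` is `0`,
not the limit `τ`. -/
noncomputable def phi1 (lam τ : ℝ) : ℝ := (Real.exp (lam * τ) - 1) / lam

/-- `τ² φ₂(λτ)` for `φ₂(z) = (e^z - 1 - z)/z²`; the junk value at `λ = 0` is `0`. -/
noncomputable def phi2 (lam τ : ℝ) : ℝ := (Real.exp (lam * τ) - 1 - lam * τ) / lam ^ 2

variable {lam : ℝ}

theorem hasDerivAt_exp_mul (lam τ : ℝ) :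
    HasDerivAt (fun τ => Real.exp (lam * τ)) (lam * Real.exp (lam * τ)) τ := by
  simpa [mul_comm] using ((hasDerivAt_id τ).const_mul lam).exp

theorem hasDerivAt_phi1 (hlam : lam ≠ 0) (τ : ℝ) :
    HasDerivAt (phi1 lam) (Real.exp (lam * τ)) τ :=
  (((hasDerivAt_exp_mul lam τ).sub_const 1).div_const lam).congr_deriv (by field_simp)

theorem hasDerivAt_phi2 (hlam : lam ≠ 0) (τ : ℝ) :
    HasDerivAt (phi2 lam) (phi1 lam τ) τ :=
  ((((hasDerivAt_exp_mul lam τ).sub_const 1).sub ((hasDerivAt_id' τ).const_mul lam)).div_const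
    (lam ^ 2)).congr_deriv (by unfold phi1; field_simp)

@[fun_prop]
theorem continuous_phi2 (lam : ℝ) : Continuous (phi2 lam) := by
  unfold phi2; fun_prop

theorem phi2_nonneg (lam τ : ℝ) : 0 ≤ phi2 lam τ :=
  div_nonneg (by linarith [Real.add_one_le_exp (lam * τ)]) (sq_nonneg lam)

theorem integral_phi2 (hlam : lam ≠ 0) (Δt : ℝ) :
    ∫ τ in (0:ℝ)..Δt, phi2 lam τ =
      (Real.exp (lam * Δt) - 1) / lam ^ 3 - Δt / lam ^ 2 - Δt ^ 2 / (2 * lam) := by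
  have hF (τ : ℝ) : HasDerivAt
      (fun τ => Real.exp (lam * τ) / lam ^ 3 - τ / lam ^ 2 - τ ^ 2 / (2 * lam)) (phi2 lam τ) τ :=
    ((((hasDerivAt_exp_mul lam τ).div_const (lam ^ 3)).sub
      ((hasDerivAt_id' τ).div_const (lam ^ 2))).sub
      ((hasDerivAt_pow 2 τ).div_const (2 * lam))).congr_deriv (by unfold phi2; field_simp; ring)
  rw [integral_eq_sub_of_hasDerivAt (fun τ _ => hF τ) ((continuous_phi2 lam).intervalIntegrable _ _)]
  simp only [mul_zero, Real.exp_zero]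
  ring

theorem integral_exp_mul_sq (hlam : lam ≠ 0) (Δt : ℝ) :
    ∫ s in (0:ℝ)..Δt, Real.exp (lam * (Δt - s)) * s ^ 2 =
      2 * (Real.exp (lam * Δt) - 1) / lam ^ 3 - 2 * Δt / lam ^ 2 - Δt ^ 2 / lam := by
  have hF (s : ℝ) : HasDerivAt
      (fun s => -(Real.exp (lam * (Δt - s)) * (s ^ 2 / lam + 2 * s / lam ^ 2 + 2 / lam ^ 3)))
      (Real.exp (lam * (Δt - s)) * s ^ 2) s := by
    have hexp := ((hasDerivAt_id' s).const_sub Δt |>.const_mul lam).exp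
    have hpoly : HasDerivAt (fun s => s ^ 2 / lam + 2 * s / lam ^ 2 + 2 / lam ^ 3)
        (2 * s / lam + 2 / lam ^ 2) s :=
      ((((hasDerivAt_pow 2 s).div_const lam).add
        (((hasDerivAt_id' s).const_mul 2).div_const (lam ^ 2))).add_const _).congr_deriv
        (by simp)
    exact (hexp.mul hpoly).neg.congr_deriv (by field_simp; ring)
  rw [integral_eq_sub_of_hasDerivAt (fun s _ => hF s)
    (Continuous.intervalIntegrable (by fun_prop) _ _)]
  simp only [sub_self, sub_zero, mul_zero, Real.exp_zero]
  field_simp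
  ring

theorem integral_exp_mul_sq_le (hlam : 0 ≤ lam) {Δt : ℝ} (hΔt : 0 ≤ Δt) :
    ∫ s in (0:ℝ)..Δt, Real.exp (lam * (Δt - s)) * s ^ 2 ≤ Real.exp (lam * Δt) * Δt ^ 3 / 3 := by
  calc ∫ s in (0:ℝ)..Δt, Real.exp (lam * (Δt - s)) * s ^ 2
      ≤ ∫ s in (0:ℝ)..Δt, Real.exp (lam * Δt) * s ^ 2 := by
        refine integral_mono_on hΔt (Continuous.intervalIntegrable (by fun_prop) _ _)
          (Continuous.intervalIntegrable (by fun_prop) _ _) fun s hs => ?_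
        gcongr
        nlinarith [hs.1]
    _ = Real.exp (lam * Δt) * Δt ^ 3 / 3 := by
        rw [integral_const_mul, integral_pow]
        ring

section

variable {E : Type*} [NormedAddCommGroup E] [NormedSpace ℝ E]

noncomputable def step (lam τ : ℝ) (x₀ h₀ h₀' : E) : E :=
  Real.exp (lam * τ) • x₀ + phi1 lam τ • h₀ + phi2 lam τ • h₀'

@[simp]
theorem step_zero (lam : ℝ) (x₀ h₀ h₀' : E) : step lam 0 x₀ h₀ h₀' = x₀ := by
  simp [step, phi1, phi2]

theorem hasDerivAt_step_const_sub (hlam : lam ≠ 0) (T : ℝ) {x h h' h'' : ℝ → E} {t : ℝ}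
    (hx : HasDerivAt x (lam • x t + h t) t) (hh : HasDerivAt h (h' t) t)
    (hh' : HasDerivAt h' (h'' t) t) :
    HasDerivAt (fun t => step lam (T - t) (x t) (h t) (h' t)) (phi2 lam (T - t) • h'' t) t := by
  have hφ₀ := (hasDerivAt_exp_mul lam (T - t)).comp_const_sub T t
  have hφ₁ := (hasDerivAt_phi1 hlam (T - t)).comp_const_sub T t
  have hφ₂ := (hasDerivAt_phi2 hlam (T - t)).comp_const_sub T t
  refine (((hφ₀.smul hx).add (hφ₁.smul hh)).add (hφ₂.smul hh')).congr_deriv ?_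
  module

variable [CompleteSpace E] {t₀ Δt : ℝ} {x h h' h'' : ℝ → E}

theorem sub_step_eq_integral (hlam : lam ≠ 0) (hΔt : 0 ≤ Δt)
    (hx : ∀ t ∈ Icc t₀ (t₀ + Δt), HasDerivAt x (lam • x t + h t) t)
    (hh : ∀ t ∈ Icc t₀ (t₀ + Δt), HasDerivAt h (h' t) t)
    (hh' : ∀ t ∈ Icc t₀ (t₀ + Δt), HasDerivAt h' (h'' t) t)
    (hcont : ContinuousOn h'' (Icc t₀ (t₀ + Δt))) :
    x (t₀ + Δt) - step lam Δt (x t₀) (h t₀) (h' t₀) =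
      ∫ t in t₀..t₀ + Δt, phi2 lam (t₀ + Δt - t) • h'' t := by
  have hIcc : uIcc t₀ (t₀ + Δt) = Icc t₀ (t₀ + Δt) := uIcc_of_le (le_add_of_nonneg_right hΔt)
  rw [integral_eq_sub_of_hasDerivAt
    (fun t ht => hasDerivAt_step_const_sub hlam (t₀ + Δt) (hx t (hIcc ▸ ht))
      (hh t (hIcc ▸ ht)) (hh' t (hIcc ▸ ht)))
    (ContinuousOn.intervalIntegrable (by rw [hIcc]; fun_prop))]
  simp

theorem norm_sub_step_le (hlam : lam ≠ 0) {M : ℝ} (hΔt : 0 ≤ Δt)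
    (hx : ∀ t ∈ Icc t₀ (t₀ + Δt), HasDerivAt x (lam • x t + h t) t)
    (hh : ∀ t ∈ Icc t₀ (t₀ + Δt), HasDerivAt h (h' t) t)
    (hh' : ∀ t ∈ Icc t₀ (t₀ + Δt), HasDerivAt h' (h'' t) t)
    (hcont : ContinuousOn h'' (Icc t₀ (t₀ + Δt))) (hM : ∀ t ∈ Icc t₀ (t₀ + Δt), ‖h'' t‖ ≤ M) :
    ‖x (t₀ + Δt) - step lam Δt (x t₀) (h t₀) (h' t₀)‖ ≤
      M / 2 * ∫ s in (0:ℝ)..Δt, Real.exp (lam * (Δt - s)) * s ^ 2 := by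
  rw [sub_step_eq_integral hlam hΔt hx hh hh' hcont]
  calc ‖∫ t in t₀..t₀ + Δt, phi2 lam (t₀ + Δt - t) • h'' t‖
      ≤ ∫ t in t₀..t₀ + Δt, M * phi2 lam (t₀ + Δt - t) := by
        refine norm_integral_le_of_norm_le (le_add_of_nonneg_right hΔt)
          (Filter.Eventually.of_forall fun t ht => ?_)
          (Continuous.intervalIntegrable (by fun_prop) _ _)
        rw [norm_smul, Real.norm_of_nonneg (phi2_nonneg _ _), mul_comm]
        exact mul_le_mul_of_nonneg_right (hM t (Ioc_subset_Icc_self ht)) (phi2_nonneg _ _)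
    _ = M / 2 * ∫ s in (0:ℝ)..Δt, Real.exp (lam * (Δt - s)) * s ^ 2 := by
        rw [integral_const_mul, integral_comp_sub_left (phi2 lam), sub_self, add_sub_cancel_left,
          integral_phi2 hlam, integral_exp_mul_sq hlam]
        field_simp

end

end ExpIntegrator

/-- One-step local truncation bound for the exponential integrator: if
`x' = λx + h` on `[t₀, t₀+Δt]` with `h` twice differentiable and `‖h''‖ ≤ M`, then the
scheme `x̂ = e^{λΔt}x(t₀) + a h(t₀) + b h'(t₀)` with `a = (e^{λΔt}−1)/λ`,
`b = (e^{λΔt}−1−λΔt)/λ²` satisfies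
`‖x(t₀+Δt) − x̂‖ ≤ (M/2)∫₀^{Δt} e^{λ(Δt−s)} s² ds ≤ (M/2) e^{λΔt} Δt³/3`. -/
theorem stmt13 {d : ℕ} (lam Δt M t₀ : ℝ) (hlam : 0 < lam) (hΔt : 0 < Δt)
    (x h h' h'' : ℝ → EuclideanSpace ℝ (Fin d))
    (hx : ∀ t ∈ Icc t₀ (t₀ + Δt), HasDerivAt x (lam • x t + h t) t)
    (hh : ∀ t ∈ Icc t₀ (t₀ + Δt), HasDerivAt h (h' t) t)
    (hh' : ∀ t ∈ Icc t₀ (t₀ + Δt), HasDerivAt h' (h'' t) t)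
    (hcont : ContinuousOn h'' (Icc t₀ (t₀ + Δt)))
    (hM : ∀ t ∈ Icc t₀ (t₀ + Δt), ‖h'' t‖ ≤ M) :
    ‖x (t₀ + Δt) -
        (Real.exp (lam * Δt) • x t₀ +
          ((Real.exp (lam * Δt) - 1) / lam) • h t₀ +
          ((Real.exp (lam * Δt) - 1 - lam * Δt) / lam ^ 2) • h' t₀)‖
      ≤ M / 2 * ∫ s in (0:ℝ)..Δt, Real.exp (lam * (Δt - s)) * s ^ 2 ∧
    M / 2 * (∫ s in (0:ℝ)..Δt, Real.exp (lam * (Δt - s)) * s ^ 2)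
      ≤ M / 2 * Real.exp (lam * Δt) * Δt ^ 3 / 3 := by
  have hM₀ : 0 ≤ M := (norm_nonneg _).trans (hM t₀ ⟨le_rfl, by linarith⟩)
  refine ⟨ExpIntegrator.norm_sub_step_le hlam.ne' hΔt.le hx hh hh' hcont hM, ?_⟩
  calc M / 2 * (∫ s in (0:ℝ)..Δt, Real.exp (lam * (Δt - s)) * s ^ 2)
      ≤ M / 2 * (Real.exp (lam * Δt) * Δt ^ 3 / 3) := by
        gcongr
        exact ExpIntegrator.integral_exp_mul_sq_le hlam.le hΔt.le
    _ = M / 2 * Real.exp (lam * Δt) * Δt ^ 3 / 3 := by ring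
end
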